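/- arXiv:2111.12195 — 2 statements merged into one kernel-verified Lean document; each statement's English description precedes it below -/
import Mathlib

section
/- The triangle multifield ℝ₊ with triangle sum a ∇ b = {c : |a−b| ≤ c ≤ a+b} is not doubly distributive: (2 ∇ 1)·(2 ∇ 1) = [1,9] while (2·2) ∇ (2·1) ∇ (1·2) ∇ (1·1) = [0,9], hence these two sets are distinct. -/
open NNReal

/-- The triangle multivalued sum on nonnegative reals:
`a ∇ b = {c : |a - b| ≤ c ≤ a + b}`. -/
def triAdd (a b : ℝ≥0) : Set ℝ≥0 :=
  {c | |(a : ℝ) - (b : ℝ)| ≤ (c : ℝ) ∧ (c : ℝ) ≤ (a : ℝ) + (b : ℝ)}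

/-- Elementwise product of two subsets of `ℝ≥0`. -/
def setMul (A B : Set ℝ≥0) : Set ℝ≥0 := {x | ∃ a ∈ A, ∃ b ∈ B, x = a * b}

/-- Extension of the triangle sum to subsets. -/
def setTri (A B : Set ℝ≥0) : Set ℝ≥0 := ⋃ a ∈ A, ⋃ b ∈ B, triAdd a b

lemma mem_triAdd {a b c : ℝ≥0} :
    c ∈ triAdd a b ↔ |(a : ℝ) - b| ≤ c ∧ (c : ℝ) ≤ a + b := Iff.rfl

lemma mul_eq : setMul (triAdd 2 1) (triAdd 2 1)
    = {x : ℝ≥0 | 1 ≤ (x : ℝ) ∧ (x : ℝ) ≤ 9} := by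
  ext x
  constructor
  · rintro ⟨a, ⟨ha1, ha2⟩, b, ⟨hb1, hb2⟩, rfl⟩
    rw [abs_le] at ha1 hb1
    push_cast at ha1 ha2 hb1 hb2 ⊢
    simp only [Set.mem_setOf_eq, NNReal.coe_mul]
    constructor <;> nlinarith [ha1.1, ha1.2, hb1.1, hb1.2]
  · rintro ⟨h1, h9⟩
    by_cases h3 : (x : ℝ) ≤ 3
    · refine ⟨x, ?_, 1, ?_, (mul_one x).symm⟩
      · exact ⟨by rw [abs_le]; push_cast; constructor <;> linarith,
          by push_cast; linarith⟩
      · exact ⟨by norm_num [abs_le], by norm_num⟩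
    · refine ⟨3, ?_, x / 3, ?_, ?_⟩
      · exact ⟨by norm_num [abs_le], by norm_num⟩
      · have hx3 : ((x / 3 : ℝ≥0) : ℝ) = (x : ℝ) / 3 := by push_cast; ring
        constructor <;> rw [hx3]
        · rw [abs_le]; push_cast; constructor <;> linarith
        · push_cast; linarith
      · rw [mul_div_cancel₀]; norm_num
    
lemma tri_eq : setTri (setTri (setTri {(4 : ℝ≥0)} {2}) {2}) {1}
    = {x : ℝ≥0 | (x : ℝ) ≤ 9} := by
  have h1 : setTri {(4 : ℝ≥0)} {2} = {x : ℝ≥0 | 2 ≤ (x : ℝ) ∧ (x : ℝ) ≤ 6} := by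
    ext x
    simp only [setTri, Set.mem_iUnion, Set.mem_singleton_iff, exists_prop,
      exists_eq_left, mem_triAdd, Set.mem_setOf_eq]
    push_cast
    rw [abs_le]
    constructor
    · rintro ⟨⟨u, v⟩, w⟩; exact ⟨by linarith, by linarith⟩
    · rintro ⟨u, v⟩; exact ⟨⟨by linarith, by linarith⟩, by linarith⟩
  have h2 : setTri (setTri {(4 : ℝ≥0)} {2}) {2}
      = {x : ℝ≥0 | (x : ℝ) ≤ 8} := by
    rw [h1]; ext x
    simp only [setTri, Set.mem_iUnion, Set.mem_singleton_iff, exists_prop,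
      exists_eq_left, mem_triAdd, Set.mem_setOf_eq]
    constructor
    · rintro ⟨a, ⟨ha2, ha6⟩, _, h⟩
      push_cast at h; linarith
    · intro h8
      by_cases h4 : (x : ℝ) ≤ 4
      · have hnn : (0:ℝ) ≤ (x : ℝ) + 2 := by positivity
        refine ⟨NNReal.mk ((x : ℝ) + 2) hnn, ⟨?_, ?_⟩, ?_, ?_⟩ <;>
          simp only [NNReal.coe_mk, NNReal.coe_ofNat]
        · linarith [x.coe_nonneg]
        · linarith
        · rw [abs_le]; constructor <;> linarith [x.coe_nonneg]
        · linarith [x.coe_nonneg]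
      · refine ⟨6, ⟨by norm_num, by norm_num⟩, ?_, ?_⟩ <;> push_cast
        · rw [abs_le]; constructor <;> linarith
        · linarith
  rw [h2]; ext x
  simp only [setTri, Set.mem_iUnion, Set.mem_singleton_iff, exists_prop,
    exists_eq_left, mem_triAdd, Set.mem_setOf_eq]
  constructor
  · rintro ⟨a, ha8, _, h⟩
    push_cast at h; linarith
  · intro h9
    by_cases h1' : (x : ℝ) ≤ 1
    · refine ⟨1, by norm_num, ?_, ?_⟩ <;> push_cast
      · rw [abs_le]; constructor <;> norm_num [x.coe_nonneg]
      · linarith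
    · have hnn : (0:ℝ) ≤ (x : ℝ) - 1 := by linarith
      refine ⟨NNReal.mk ((x : ℝ) - 1) hnn, ?_, ?_, ?_⟩ <;>
        simp only [NNReal.coe_mk, NNReal.coe_one]
      · linarith
      · rw [abs_le]; constructor <;> linarith
      · linarith

/-- The triangle multifield is not doubly distributive:
`(2∇1)·(2∇1) = [1,9]` while `(2·2)∇(2·1)∇(1·2)∇(1·1) = 4∇2∇2∇1 = [0,9]`,
so the two sets differ. -/
theorem triangle_not_doubly_distributive :
    setMul (triAdd 2 1) (triAdd 2 1) = {x : ℝ≥0 | 1 ≤ (x : ℝ) ∧ (x : ℝ) ≤ 9} ∧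
    setTri (setTri (setTri {(4 : ℝ≥0)} {2}) {2}) {1} = {x : ℝ≥0 | (x : ℝ) ≤ 9} ∧
    setMul (triAdd 2 1) (triAdd 2 1) ≠ setTri (setTri (setTri {(4 : ℝ≥0)} {2}) {2}) {1} := by

  refine ⟨mul_eq, tri_eq, ?_⟩
  rw [mul_eq, tri_eq]
  intro h
  have : (0 : ℝ≥0) ∈ {x : ℝ≥0 | 1 ≤ (x : ℝ) ∧ (x : ℝ) ≤ 9} := by
    rw [h]; norm_num
  exact absurd this.1 (by norm_num)
end

section
/- Let K be a multifield. Every ideal of the polynomial superring K[X] is principal: if I ⊆ K[X] is a nonzero ideal and b ∈ I is a nonzero polynomial of minimal degree among nonzero elements of I, then I = K[X]·b (the set of all elements of products p·b for p ∈ K[X]). -/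
/-- A (commutative, unital) multiring: multivalued addition, single-valued
commutative multiplication, absorbing zero, weak distributivity. -/
structure Multiring (R : Type*) where
  add : R → R → Set R
  mul : R → R → R
  neg : R → R
  zero : R
  one : R
  add_nonempty : ∀ a b, (add a b).Nonempty
  add_inv : ∀ a b c, c ∈ add a b → a ∈ add c (neg b) ∧ b ∈ add (neg a) c
  add_zero_iff : ∀ a b, b ∈ add a zero ↔ a = b
  add_comm : ∀ a b, add a b = add b a
  add_assoc : ∀ a b c t x, x ∈ add a b → t ∈ add x c → ∃ y ∈ add b c, t ∈ add a y
  mul_assoc : ∀ a b c, mul (mul a b) c = mul a (mul b c)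
  mul_comm : ∀ a b, mul a b = mul b a
  mul_one : ∀ a, mul a one = a
  mul_zero : ∀ a, mul a zero = zero
  distrib : ∀ a b c d, d ∈ add a b → mul c d ∈ add (mul c a) (mul c b)

namespace Multiring

variable {R : Type*}

/-- Iterated multivalued sum of a list of elements: `Σ [] = {0}`, and
`x ∈ Σ (a :: l)` iff `x ∈ y + a` for some `y ∈ Σ l`. -/
def listSum (M : Multiring R) : List R → Set R
  | [] => {M.zero}
  | a :: l => ⋃ y ∈ M.listSum l, M.add y a

/-- Eventually-zero sequences: the carrier of the polynomial superring `R[X]`. -/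
def EvZero (M : Multiring R) (f : ℕ → R) : Prop := ∃ N, ∀ n, N ≤ n → f n = M.zero

/-- Addition in `R[X]`: `(cₙ) ∈ (aₙ)+(bₙ)` iff `cₙ ∈ aₙ+bₙ` for all `n`. -/
def polyAdd (M : Multiring R) (f g : ℕ → R) : Set (ℕ → R) :=
  {h | ∀ n, h n ∈ M.add (f n) (g n)}

/-- Multiplication in `R[X]`: `(cₙ) ∈ (aₙ)·(bₙ)` iff `cₙ ∈ Σ_{i+j=n} aᵢ·bⱼ`. -/
def polyMul (M : Multiring R) (f g : ℕ → R) : Set (ℕ → R) :=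
  {h | ∀ n, h n ∈ M.listSum ((List.range (n + 1)).map fun i => M.mul (f i) (g (n - i)))}

/-- The degree of an eventually-zero sequence: the smallest `t` with
`f n = 0` for all `n ≥ t`. -/
noncomputable def deg (M : Multiring R) (f : ℕ → R) : ℕ :=
  sInf {t : ℕ | ∀ n, t ≤ n → f n = M.zero}

end Multiring


namespace Multiring

variable {K : Type*} (M : Multiring K)

lemma mem_add_zero_self (a : K) : a ∈ M.add a M.zero := (M.add_zero_iff a a).mpr rfl

lemma mem_zero_add_self (a : K) : a ∈ M.add M.zero a := by
  rw [M.add_comm]; exact M.mem_add_zero_self a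

lemma zero_mem_neg_add (a : K) : M.zero ∈ M.add (M.neg a) a :=
  (M.add_inv a M.zero a (M.mem_add_zero_self a)).2

lemma zero_mem_add_neg (a : K) : M.zero ∈ M.add a (M.neg a) := by
  rw [M.add_comm]; exact M.zero_mem_neg_add a

lemma neg_zero : M.neg M.zero = M.zero :=
  (M.add_zero_iff _ _).mp (M.zero_mem_neg_add M.zero)

lemma neg_neg (a : K) : M.neg (M.neg a) = a :=
  (M.add_zero_iff _ a).mp (M.add_inv (M.neg a) a M.zero (M.zero_mem_neg_add a)).2

lemma mul_zero' (a : K) : M.mul M.zero a = M.zero := by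
  rw [M.mul_comm]; exact M.mul_zero a

lemma neg_eq_mul_neg_one (x : K) : M.neg x = M.mul (M.neg M.one) x := by
  have h2 := M.distrib M.one (M.neg M.one) x M.zero (M.zero_mem_add_neg M.one)
  rw [M.mul_zero, M.mul_one] at h2
  have h3 := (M.add_inv x (M.mul x (M.neg M.one)) M.zero h2).2
  have h4 := (M.add_zero_iff (M.neg x) _).mp h3
  rw [h4, M.mul_comm]

lemma mem_listSum_cons {x a : K} {l : List K} :
    x ∈ M.listSum (a :: l) ↔ ∃ y ∈ M.listSum l, x ∈ M.add y a := by
  simp [listSum]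

lemma listSum_zero_cons (l : List K) : M.listSum (M.zero :: l) = M.listSum l := by
  ext x
  rw [M.mem_listSum_cons]
  constructor
  · rintro ⟨y, hy, hx⟩
    rwa [← (M.add_zero_iff y x).mp hx]
  · intro hx
    exact ⟨x, hx, M.mem_add_zero_self x⟩

lemma listSum_all_zero : ∀ l : List K, (∀ x ∈ l, x = M.zero) → M.listSum l = {M.zero}
  | [] => fun _ => rfl
  | a :: l => by
    intro h
    have ha : a = M.zero := h a (by simp)
    subst ha
    rw [M.listSum_zero_cons]
    exact listSum_all_zero l fun x hx => h x (by simp [hx])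

lemma zero_mem_listSum {l : List K} (h : ∀ x ∈ l, x = M.zero) : M.zero ∈ M.listSum l := by
  rw [listSum_all_zero M l h]; rfl

lemma listSum_update : ∀ (L₁ : List K) (L₂ : List K) (a y t : K),
    y ∈ M.listSum (L₁ ++ M.zero :: L₂) → t ∈ M.add y a → t ∈ M.listSum (L₁ ++ a :: L₂)
  | [], L₂, a, y, t => by
    intro hy ht
    rw [List.nil_append] at *
    rw [M.listSum_zero_cons] at hy
    exact M.mem_listSum_cons.mpr ⟨y, hy, ht⟩
  | c :: L₁, L₂, a, y, t => by
    intro hy ht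
    rw [List.cons_append] at hy ⊢
    obtain ⟨y', hy', hyc⟩ := M.mem_listSum_cons.mp hy
    rw [M.add_comm] at hyc
    obtain ⟨z, hz, htz⟩ := M.add_assoc c y' a t y hyc ht
    have hzL := listSum_update L₁ L₂ a y' z hy' hz
    rw [M.add_comm] at htz
    exact M.mem_listSum_cons.mpr ⟨z, hzL, htz⟩

lemma map_range_split {α : Type*} (F : ℕ → α) {j k : ℕ} (h : j ≤ k) :
    (List.range (k+1)).map F
      = (List.range j).map F ++ F j :: (List.range (k - j)).map (fun i => F (j + (i+1))) := by
  have hk : k + 1 = j + ((k - j) + 1) := by omega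
  rw [hk, List.range_add, List.map_append]
  congr 1
  rw [List.range_succ_eq_map, List.map_cons, List.map_map]
  simp [Function.comp_def, Nat.succ_eq_add_one, List.map_map]

lemma deg_spec {f : ℕ → K} (hf : M.EvZero f) : ∀ n, M.deg f ≤ n → f n = M.zero := by
  have : M.deg f ∈ {t : ℕ | ∀ n, t ≤ n → f n = M.zero} := Nat.sInf_mem hf
  exact this

lemma deg_le {f : ℕ → K} {t : ℕ} (h : ∀ n, t ≤ n → f n = M.zero) : M.deg f ≤ t :=
  Nat.sInf_le h

lemma deg_zero_iff {f : ℕ → K} (hf : M.EvZero f) : M.deg f = 0 ↔ f = fun _ => M.zero := by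
  constructor
  · intro h
    funext n
    exact M.deg_spec hf n (by omega)
  · intro h
    have : M.deg f ≤ 0 := M.deg_le fun n _ => by rw [h]
    omega

lemma lead_ne_zero {f : ℕ → K} (hf : M.EvZero f) (h0 : f ≠ fun _ => M.zero) :
    f (M.deg f - 1) ≠ M.zero ∧ 1 ≤ M.deg f := by
  have hpos : 1 ≤ M.deg f := by
    rcases Nat.eq_zero_or_pos (M.deg f) with h | h
    · exact absurd ((M.deg_zero_iff hf).mp h) h0
    · exact h
  refine ⟨?_, hpos⟩
  intro hl
  have hle : M.deg f ≤ M.deg f - 1 := by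
    apply M.deg_le
    intro n hn
    rcases eq_or_lt_of_le hn with h | h
    · rw [← h]; exact hl
    · exact M.deg_spec hf n (by omega)
  omega

lemma smul_mem_polyMul (c : K) (f : ℕ → K) :
    (fun k => M.mul c (f k)) ∈ M.polyMul (fun i => if i = 0 then c else M.zero) f := by
  intro k
  show M.mul c (f k) ∈ _
  rw [map_range_split (fun i => M.mul (if i = 0 then c else M.zero) (f (k - i))) (Nat.zero_le k)]
  refine listSum_update M _ _ _ M.zero _ ?_ ?_
  · apply zero_mem_listSum
    intro x hx
    simp only [List.range_zero, List.map_nil, List.nil_append, List.mem_cons, List.mem_map,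
      List.mem_range] at hx
    rcases hx with rfl | ⟨i, hi, rfl⟩
    · rfl
    · rw [if_neg (by omega), M.mul_zero']
  · have h : M.mul (if (0:ℕ) = 0 then c else M.zero) (f (k - 0)) = M.mul c (f k) := by
      norm_num
    rw [h]
    exact M.mem_zero_add_self _


lemma division_easy (b f : ℕ → K) (h : f = (fun _ => M.zero) ∨ M.deg f < M.deg b) :
    ∃ q s r, M.EvZero q ∧ s ∈ M.polyMul q b ∧ f ∈ M.polyAdd s r ∧
      (r = (fun _ => M.zero) ∨ M.deg r < M.deg b) ∧
      (∀ i, M.deg f < i + M.deg b → q i = M.zero) := by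
  refine ⟨fun _ => M.zero, fun _ => M.zero, f, ⟨0, fun _ _ => rfl⟩, ?_, ?_, h, fun _ _ => rfl⟩
  · intro k
    apply zero_mem_listSum
    intro x hx
    simp only [List.mem_map, List.mem_range] at hx
    obtain ⟨i, _, rfl⟩ := hx
    exact M.mul_zero' _
  · intro k
    exact M.mem_zero_add_self (f k)

lemma division (hinv : ∀ a : K, a ≠ M.zero → ∃ u, M.mul a u = M.one)
    (b : ℕ → K) (hbev : M.EvZero b) (hb0 : b ≠ fun _ => M.zero) :
    ∀ n (f : ℕ → K), M.EvZero f → M.deg f ≤ n →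
      ∃ q s r, M.EvZero q ∧ s ∈ M.polyMul q b ∧ f ∈ M.polyAdd s r ∧
        (r = (fun _ => M.zero) ∨ M.deg r < M.deg b) ∧
        (∀ i, M.deg f < i + M.deg b → q i = M.zero) := by
  intro n
  induction n with
  | zero =>
    intro f hf hd
    exact M.division_easy b f (Or.inl ((M.deg_zero_iff hf).mp (by omega)))
  | succ n ih =>
    intro f hf hd
    by_cases hcase : f = (fun _ => M.zero) ∨ M.deg f < M.deg b
    · exact M.division_easy b f hcase
    push_neg at hcase
    obtain ⟨hf0, hdb⟩ := hcase
    set N := M.deg f with hNdef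
    set d := M.deg b with hddef
    obtain ⟨ha, hN1⟩ := M.lead_ne_zero hf hf0
    obtain ⟨hc, hd1⟩ := M.lead_ne_zero hbev hb0
    obtain ⟨u, hu⟩ := hinv (b (d - 1)) hc
    set j := N - d with hjdef
    have hjd : j + d = N := by omega
    set s₁ : ℕ → K := fun k => if j ≤ k then M.mul (M.mul (f (N-1)) u) (b (k - j)) else M.zero
      with hs₁def
    have hs₁top : ∀ k, N ≤ k → s₁ k = M.zero := by
      intro k hk
      simp only [hs₁def]
      rw [if_pos (by omega), M.deg_spec hbev (k - j) (by omega), M.mul_zero]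
    have hs₁lead : s₁ (N - 1) = f (N - 1) := by
      simp only [hs₁def]
      rw [if_pos (by omega)]
      have hnd : N - 1 - j = d - 1 := by omega
      rw [hnd, M.mul_assoc, M.mul_comm u _, hu, M.mul_one]
    set g : ℕ → K := fun k =>
        if N - 1 ≤ k then M.zero else Classical.choose (M.add_nonempty (f k) (M.neg (s₁ k)))
      with hgdef
    have hgz : ∀ k, N - 1 ≤ k → g k = M.zero := by
      intro k hk
      simp only [hgdef]
      rw [if_pos hk]
    have hg : ∀ k, g k ∈ M.add (f k) (M.neg (s₁ k)) := by
      intro k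
      by_cases hk : N - 1 ≤ k
      · rw [hgz k hk]
        by_cases hk2 : N ≤ k
        · rw [M.deg_spec hf k hk2, hs₁top k hk2, M.neg_zero]
          exact (M.add_zero_iff M.zero M.zero).mpr rfl
        · have hkeq : k = N - 1 := by omega
          rw [hkeq, hs₁lead]
          exact M.zero_mem_add_neg (f (N-1))
      · simp only [hgdef]
        rw [if_neg hk]
        exact Classical.choose_spec (M.add_nonempty (f k) (M.neg (s₁ k)))
    have hgev : M.EvZero g := ⟨N - 1, hgz⟩
    have hgdeg : M.deg g ≤ N - 1 := M.deg_le hgz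
    obtain ⟨q', s', r, hq'ev, hs', hgr, hrsmall, hq'b⟩ := ih g hgev (by omega)
    have hq'j : q' j = M.zero := hq'b j (by omega)
    set q : ℕ → K := fun i => if i = j then M.mul (f (N-1)) u else q' i with hqdef
    have key : ∀ k, ∃ z, z ∈ M.add (s' k) (s₁ k) ∧ f k ∈ M.add (r k) z := by
      intro k
      have h1 : f k ∈ M.add (g k) (s₁ k) := by
        have h := (M.add_inv (f k) (M.neg (s₁ k)) (g k) (hg k)).1
        rwa [M.neg_neg] at h
      have h2 : g k ∈ M.add (r k) (s' k) := by rw [M.add_comm]; exact hgr k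
      obtain ⟨z, hz1, hz2⟩ := M.add_assoc (r k) (s' k) (s₁ k) (f k) (g k) h2 h1
      exact ⟨z, hz1, hz2⟩
    choose S hS1 hS2 using key
    refine ⟨q, S, r, ?_, ?_, ?_, hrsmall, ?_⟩
    · refine ⟨N + 1, fun i hi => ?_⟩
      simp only [hqdef]
      rw [if_neg (by omega)]
      exact hq'b i (by omega)
    · -- S ∈ polyMul q b
      intro k
      by_cases hk : j ≤ k
      · rw [map_range_split (fun i => M.mul (q i) (b (k - i))) hk]
        have hAeq : (List.range j).map (fun i => M.mul (q i) (b (k-i)))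
            = (List.range j).map (fun i => M.mul (q' i) (b (k-i))) := by
          apply List.map_congr_left
          intro i hi
          rw [List.mem_range] at hi
          simp only [hqdef]
          rw [if_neg (by omega)]
        have hTeq : (List.range (k - j)).map (fun i => M.mul (q (j + (i+1))) (b (k - (j + (i+1)))))
            = (List.range (k - j)).map (fun i => M.mul (q' (j + (i+1))) (b (k - (j + (i+1))))) := by
          apply List.map_congr_left
          intro i hi
          simp only [hqdef]
          rw [if_neg (by omega)]
        have hqj : M.mul (q j) (b (k - j)) = s₁ k := by
          simp [hqdef, hs₁def, hk]
        rw [hAeq, hTeq, hqj]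
        have hmem : s' k ∈ M.listSum ((List.range j).map (fun i => M.mul (q' i) (b (k-i)))
            ++ M.zero :: (List.range (k - j)).map
              (fun i => M.mul (q' (j + (i+1))) (b (k - (j + (i+1)))))) := by
          have h := hs' k
          rw [map_range_split (fun i => M.mul (q' i) (b (k - i))) hk] at h
          rwa [hq'j, M.mul_zero'] at h
        exact listSum_update M _ _ _ _ _ hmem (hS1 k)
      · have hs₁k : s₁ k = M.zero := by
          simp only [hs₁def]
          rw [if_neg hk]
        have hSk : S k = s' k := by
          have h := hS1 k
          rw [hs₁k] at h
          exact ((M.add_zero_iff (s' k) (S k)).mp h).symm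
        have hlist : (List.range (k+1)).map (fun i => M.mul (q i) (b (k-i)))
            = (List.range (k+1)).map (fun i => M.mul (q' i) (b (k-i))) := by
          apply List.map_congr_left
          intro i hi
          rw [List.mem_range] at hi
          simp only [hqdef]
          rw [if_neg (by omega)]
        rw [hSk, hlist]
        exact hs' k
    · intro k
      rw [M.add_comm]
      exact hS2 k
    · intro i hi
      simp only [hqdef]
      rw [if_neg (by omega)]
      exact hq'b i (by omega)

end Multiring

/-- Every ideal of `K[X]` over a multifield `K` is principal: if `I` is an ideal
and `b ∈ I` is nonzero of minimal degree among nonzero elements of `I`, then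
`I = K[X]·b`. -/
theorem ideal_principal {K : Type*} (M : Multiring K)
    (hnt : M.one ≠ M.zero) (hinv : ∀ a : K, a ≠ M.zero → ∃ b, M.mul a b = M.one)
    (I : Set (ℕ → K))
    (hIev : ∀ f ∈ I, M.EvZero f)
    (hIne : I.Nonempty)
    (hIadd : ∀ f ∈ I, ∀ g ∈ I, M.polyAdd f g ⊆ I)
    (hImul : ∀ p : ℕ → K, M.EvZero p → ∀ f ∈ I, M.polyMul p f ⊆ I)
    (b : ℕ → K) (hbI : b ∈ I) (hb0 : b ≠ fun _ => M.zero)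
    (hbmin : ∀ f ∈ I, f ≠ (fun _ => M.zero) → M.deg b ≤ M.deg f) :
    I = {f | ∃ p : ℕ → K, M.EvZero p ∧ f ∈ M.polyMul p b} := by
  have hbev : M.EvZero b := hIev b hbI
  ext f
  constructor
  · intro hf
    have hfev : M.EvZero f := hIev f hf
    obtain ⟨q, s, r, hqev, hs, hfsr, hrsmall, -⟩ :=
      M.division hinv b hbev hb0 (M.deg f) f hfev le_rfl
    have hsI : s ∈ I := hImul q hqev b hbI hs
    -- the pointwise negation of s lies in I
    have hnegs : (fun k => M.neg (s k)) ∈ I := by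
      have heq : (fun k => M.neg (s k)) = fun k => M.mul (M.neg M.one) (s k) := by
        funext k
        exact M.neg_eq_mul_neg_one (s k)
      have hmem := M.smul_mem_polyMul (M.neg M.one) s
      rw [← heq] at hmem
      exact hImul (fun i => if i = 0 then M.neg M.one else M.zero)
        ⟨1, fun n hn => if_neg (by omega)⟩ s hsI hmem
    have hrI : r ∈ I := by
      apply hIadd _ hnegs f hf
      intro k
      exact (M.add_inv (s k) (r k) (f k) (hfsr k)).2
    by_cases hr0 : r = fun _ => M.zero
    · have hfs : f = s := by
        funext k
        have h := hfsr k
        rw [hr0] at h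
        exact ((M.add_zero_iff (s k) (f k)).mp h).symm
      exact ⟨q, hqev, by rw [hfs]; exact hs⟩
    · exfalso
      rcases hrsmall with h | h
      · exact hr0 h
      · exact absurd (hbmin r hrI hr0) (by omega)
  · rintro ⟨p, hpev, hfp⟩
    exact hImul p hpev b hbI hfp
end
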